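/- arXiv:0711.2397 — 3 statements merged into one kernel-verified Lean document; each statement's English description precedes it below -/
import Mathlib

section
/- Every vertex of a d-dimensional convex polytope is incident to at least d edges of the polytope. -/
open AffineMap Module Set

/-!
Separate the vertex `x` from the other points of `S` by a hyperplane `f = c`. The points where the
segments from `x` to the other points of `S` cross it span the vertex figure `Q`; its affine span
together with `x` contains `S`, so `Q` has at least `dim (conv S)` vertices. Tilting a functional
that exposes a vertex `v` of `Q` until it takes the same value at `x` and `v` exposes a face of
`conv S` lying on the line `xv`, i.e. an edge through `x` and `v`. Distinct vertices of `Q` give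
distinct edges, because an edge through `x` meets the hyperplane at most once.
-/

theorem finrank_vectorSpan_insert_le_ncard {k V P : Type*} [DivisionRing k] [AddCommGroup V]
    [Module k V] [AddTorsor V P] {s : Set P} (hs : s.Finite) (x : P) :
    finrank k (vectorSpan k (insert x s)) ≤ s.ncard := by
  induction s, hs using Set.Finite.induction_on with
  | empty => rw [insert_empty_eq, vectorSpan_singleton, finrank_bot]; exact Nat.zero_le _
  | @insert a s ha hs ih =>
    rw [Set.insert_comm, Set.ncard_insert_of_notMem ha hs]
    exact (finrank_vectorSpan_insert_le_set k _ a).trans (by omega)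

theorem finrank_vectorSpan_eq_one_of_subset_affineSpan_pair {k V P : Type*} [DivisionRing k]
    [AddCommGroup V] [Module k V] [AddTorsor V P] {F : Set P} {x v : P} (hxv : x ≠ v)
    (hx : x ∈ F) (hv : v ∈ F) (hF : F ⊆ line[k, x, v]) :
    finrank k (vectorSpan k F) = 1 := by
  have hspan : vectorSpan k F = vectorSpan k {x, v} := by
    refine le_antisymm ?_ (vectorSpan_mono k (pair_subset hx hv))
    simpa only [direction_affineSpan] using AffineSubspace.direction_le (affineSpan_le.2 hF)
  rw [hspan, vectorSpan_pair, finrank_span_singleton (vsub_ne_zero.2 hxv)]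

theorem Collinear.subsingleton_inter_level {k V : Type*} [Field k] [AddCommGroup V] [Module k V]
    {F : Set V} {x : V} (hF : Collinear k F) (hx : x ∈ F) (f : V →ₗ[k] k) {c : k}
    (hfx : f x ≠ c) : {p ∈ F | f p = c}.Subsingleton := by
  obtain ⟨u, hu⟩ := (collinear_iff_of_mem hx).1 hF
  rintro p ⟨hp, hfp⟩ q ⟨hq, hfq⟩
  obtain ⟨r, rfl⟩ := hu p hp
  obtain ⟨r', rfl⟩ := hu q hq
  simp only [vadd_eq_add, map_add, map_smul, smul_eq_mul] at hfp hfq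
  have hfu : f u ≠ 0 := fun h => hfx (by simpa [h] using hfp)
  rw [mul_right_cancel₀ hfu (add_right_cancel (hfp.trans hfq.symm))]

section Polytope

variable {E : Type*} [NormedAddCommGroup E] [NormedSpace ℝ E]

def edgesThrough (A : Set E) (x : E) : Set (Set E) :=
  {F | IsExposed ℝ A F ∧ x ∈ F ∧ finrank ℝ (vectorSpan ℝ F) = 1}

theorem convexHull_eq_of_extremePoints_subset {A B : Set E} (hA : IsCompact A)
    (hAc : Convex ℝ A) (hB : B.Finite) (hAB : A.extremePoints ℝ ⊆ B) (hBA : B ⊆ A) :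
    convexHull ℝ B = A := by
  refine (convexHull_min hBA hAc).antisymm ?_
  conv_lhs => rw [← closure_convexHull_extremePoints hA hAc]
  exact closure_minimal (convexHull_mono hAB) (hB.isClosed_convexHull (𝕜 := ℝ))

theorem IsExposed.eq_convexHull_inter {S F : Set E} (hS : S.Finite)
    (hF : IsExposed ℝ (convexHull ℝ S) F) : F = convexHull ℝ (F ∩ S) := by
  refine (convexHull_eq_of_extremePoints_subset (hF.isCompact (hS.isCompact_convexHull ℝ))
    (hF.convex (convex_convexHull ℝ S)) (hS.inter_of_right F) (fun y hy => ⟨hy.1, ?_⟩)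
    inter_subset_left).symm
  exact extremePoints_convexHull_subset (hF.isExtreme.extremePoints_subset_extremePoints hy)

theorem Set.Finite.setOf_isExposed_convexHull {S : Set E} (hS : S.Finite) :
    {F | IsExposed ℝ (convexHull ℝ S) F}.Finite :=
  (hS.finite_subsets.image (convexHull ℝ)).subset fun F hF =>
    ⟨F ∩ S, inter_subset_right, (hF.eq_convexHull_inter hS).symm⟩

theorem exists_forall_lt_lt_of_mem_extremePoints_convexHull {S : Set E} {x : E} (hS : S.Finite)
    (hx : x ∈ (convexHull ℝ S).extremePoints ℝ) :
    ∃ (f : StrongDual ℝ E) (c : ℝ), c < f x ∧ ∀ y ∈ S, y ≠ x → f y < c := by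
  have hxS : x ∉ convexHull ℝ (S \ {x}) := fun h =>
    ((convex_convexHull ℝ S).mem_extremePoints_iff_mem_sdiff_convexHull_sdiff.1 hx).2
      (convexHull_mono (sdiff_subset_sdiff_left (subset_convexHull ℝ S)) h)
  obtain ⟨f, c, hfc, hcx⟩ := geometric_hahn_banach_closed_point (convex_convexHull ℝ _)
    (hS.sdiff.isClosed_convexHull (𝕜 := ℝ)) hxS
  exact ⟨f, c, hcx, fun y hy hyx => hfc y (subset_convexHull ℝ _ ⟨hy, hyx⟩)⟩

noncomputable def levelCrossing (f : StrongDual ℝ E) (c : ℝ) (x s : E) : E :=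
  lineMap x s ((f x - c) / (f x - f s))

section levelCrossing

variable {f : StrongDual ℝ E} {c : ℝ} {x s : E}

theorem levelCrossing_ratio_mem_Ioc (hc : c < f x) (hs : f s ≤ c) :
    (f x - c) / (f x - f s) ∈ Ioc (0 : ℝ) 1 :=
  ⟨div_pos (by linarith) (by linarith), (div_le_one (by linarith)).2 (by linarith)⟩

theorem apply_levelCrossing (hs : f s ≠ f x) : f (levelCrossing f c x s) = c := by
  have : f x - f s ≠ 0 := sub_ne_zero.2 hs.symm
  simp only [levelCrossing, lineMap_apply_module, map_add, map_smul, smul_eq_mul]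
  field_simp
  ring

theorem apply_levelCrossing_eq_lineMap (h : StrongDual ℝ E) :
    h (levelCrossing f c x s) = lineMap (h x) (h s) ((f x - c) / (f x - f s)) := by
  simp [levelCrossing, lineMap_apply_module]

theorem levelCrossing_mem_segment (hc : c < f x) (hs : f s ≤ c) :
    levelCrossing f c x s ∈ segment ℝ x s :=
  lineMap_mem_segment ℝ x s (Ioc_subset_Icc_self (levelCrossing_ratio_mem_Ioc hc hs))

theorem mem_affineSpan_pair_levelCrossing (hc : c < f x) (hs : f s ≤ c) :
    s ∈ line[ℝ, x, levelCrossing f c x s] := by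
  have hr := (levelCrossing_ratio_mem_Ioc hc hs).1.ne'
  convert lineMap_mem_affineSpan_pair ((f x - c) / (f x - f s))⁻¹ x (levelCrossing f c x s)
  rw [levelCrossing, lineMap_lineMap_right, inv_mul_cancel₀ hr, lineMap_apply_one]

theorem apply_eq_of_mem_image_levelCrossing {S : Set E} (hc : c < f x)
    (hSc : ∀ s ∈ S, s ≠ x → f s ≤ c) : ∀ y ∈ levelCrossing f c x '' (S \ {x}), f y = c := by
  rintro _ ⟨s, ⟨hsS, hsx⟩, rfl⟩
  exact apply_levelCrossing ((hSc s hsS hsx).trans_lt hc).ne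

end levelCrossing

theorem toExposed_mem_edgesThrough {S : Set E} {x v : E} (hS : S.Finite) (h : StrongDual ℝ E)
    (hxS : x ∈ S) (hvS : v ∈ convexHull ℝ S) (hxv : x ≠ v) (hhv : h v = h x)
    (hmax : ∀ s ∈ S, h s ≤ h x) (hline : ∀ s ∈ S, h s = h x → s ∈ line[ℝ, x, v]) :
    h.toExposed (convexHull ℝ S) ∈ edgesThrough (convexHull ℝ S) x ∧
      v ∈ h.toExposed (convexHull ℝ S) := by
  have hmax' : ∀ z ∈ convexHull ℝ S, h z ≤ h x :=
    convexHull_min hmax (convex_halfSpace_le h.isLinear (h x))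
  have hxF : x ∈ h.toExposed (convexHull ℝ S) := ⟨subset_convexHull ℝ S hxS, hmax'⟩
  have hvF : v ∈ h.toExposed (convexHull ℝ S) := ⟨hvS, fun z hz => hhv ▸ hmax' z hz⟩
  have hFline : h.toExposed (convexHull ℝ S) ⊆ line[ℝ, x, v] := by
    rw [ContinuousLinearMap.toExposed.isExposed.eq_convexHull_inter hS]
    refine convexHull_min (fun s ⟨hsF, hsS⟩ => hline s hsS ?_) (affineSpan ℝ _).convex
    exact (hmax s hsS).antisymm (hsF.2 x (subset_convexHull ℝ S hxS))
  exact ⟨⟨ContinuousLinearMap.toExposed.isExposed, hxF,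
    finrank_vectorSpan_eq_one_of_subset_affineSpan_pair hxv hxF hvF hFline⟩, hvF⟩

theorem exists_mem_edgesThrough_of_mem_extremePoints {S : Set E} {x v : E}
    {f : StrongDual ℝ E} {c : ℝ} (hS : S.Finite) (hxS : x ∈ S) (hc : c < f x)
    (hSc : ∀ s ∈ S, s ≠ x → f s ≤ c)
    (hv : v ∈ (convexHull ℝ (levelCrossing f c x '' (S \ {x}))).extremePoints ℝ) :
    ∃ F ∈ edgesThrough (convexHull ℝ S) x, v ∈ F := by
  set T := levelCrossing f c x '' (S \ {x})
  have hfT : ∀ y ∈ T, f y = c := apply_eq_of_mem_image_levelCrossing hc hSc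
  have hvT : v ∈ T := extremePoints_convexHull_subset hv
  obtain ⟨ψ, u, huv, hψ⟩ :=
    exists_forall_lt_lt_of_mem_extremePoints_convexHull (hS.sdiff.image _) hv
  -- tilt `ψ` along `f` until it takes the same value at `x` and `v`
  set h : StrongDual ℝ E := ψ + ((ψ v - ψ x) / (f x - c)) • f
  have happ : ∀ z, h z = ψ z + (ψ v - ψ x) / (f x - c) * f z := fun z => rfl
  have hhv : h v = h x := by
    have : f x - c ≠ 0 := sub_ne_zero.2 hc.ne'
    rw [happ, happ, hfT v hvT]
    field_simp
    ring
  have hhT : ∀ y ∈ T, y ≠ v → h y < h x := by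
    intro y hy hyv
    rw [← hhv, happ, happ, hfT y hy, hfT v hvT]
    linarith [hψ y hy hyv]
  have hmax : ∀ s ∈ S, s ≠ x → h s ≤ h x ∧ (h s = h x → levelCrossing f c x s = v) := by
    intro s hsS hsx
    have hts : levelCrossing f c x s ∈ T := ⟨s, ⟨hsS, hsx⟩, rfl⟩
    have hr := (levelCrossing_ratio_mem_Ioc hc (hSc s hsS hsx)).1
    have hht : h (levelCrossing f c x s) = lineMap (h x) (h s) ((f x - c) / (f x - f s)) :=
      apply_levelCrossing_eq_lineMap h
    constructor
    · rw [← lineMap_le_left_iff_le hr, ← hht]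
      rcases eq_or_ne (levelCrossing f c x s) v with heq | hne
      · exact (heq ▸ hhv).le
      · exact (hhT _ hts hne).le
    · intro hhs
      by_contra hne
      have := hhT _ hts hne
      rw [hht, hhs, lineMap_same_apply] at this
      exact this.false
  obtain ⟨s₀, ⟨hs₀S, hs₀x⟩, rfl⟩ := hvT
  refine ⟨_, toExposed_mem_edgesThrough hS h hxS ?_ ?_ hhv ?_ ?_⟩
  · exact (convex_convexHull ℝ S).segment_subset (subset_convexHull ℝ S hxS)
      (subset_convexHull ℝ S hs₀S) (levelCrossing_mem_segment hc (hSc s₀ hs₀S hs₀x))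
  · intro hxv
    have := hfT _ ⟨s₀, ⟨hs₀S, hs₀x⟩, rfl⟩
    rw [← hxv] at this
    exact hc.ne' this
  · intro s hsS
    rcases eq_or_ne s x with rfl | hsx
    · exact le_rfl
    · exact (hmax s hsS hsx).1
  · intro s hsS hsh
    rcases eq_or_ne s x with rfl | hsx
    · exact left_mem_affineSpan_pair ℝ _ _
    · rw [← (hmax s hsS hsx).2 hsh]
      exact mem_affineSpan_pair_levelCrossing hc (hSc s hsS hsx)

theorem finrank_vectorSpan_le_ncard_edgesThrough {S : Set E} {x : E} (hS : S.Finite)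
    (hx : x ∈ (convexHull ℝ S).extremePoints ℝ) :
    finrank ℝ (vectorSpan ℝ S) ≤ (edgesThrough (convexHull ℝ S) x).ncard := by
  have hxS : x ∈ S := extremePoints_convexHull_subset hx
  obtain ⟨f, c, hc, hSc⟩ := exists_forall_lt_lt_of_mem_extremePoints_convexHull hS hx
  replace hSc : ∀ s ∈ S, s ≠ x → f s ≤ c := fun s hsS hsx => (hSc s hsS hsx).le
  set T := levelCrossing f c x '' (S \ {x})
  set V := (convexHull ℝ T).extremePoints ℝ
  have hT : T.Finite := hS.sdiff.image _
  have hV : V.Finite := hT.subset extremePoints_convexHull_subset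
  have hfT : ∀ y ∈ T, f y = c := apply_eq_of_mem_image_levelCrossing hc hSc
  choose! edge hedge hvedge using fun v (hv : v ∈ V) =>
    exists_mem_edgesThrough_of_mem_extremePoints hS hxS hc hSc hv
  have hinj : InjOn edge V := by
    intro v hv w hw hvw
    obtain ⟨-, hxe, hrank⟩ := hedge v hv
    have : FiniteDimensional ℝ (vectorSpan ℝ (edge v)) := .of_finrank_eq_succ hrank
    exact (collinear_iff_finrank_le_one.2 hrank.le).subsingleton_inter_level hxe
      (f : E →ₗ[ℝ] ℝ) hc.ne' ⟨hvedge v hv, hfT v (extremePoints_convexHull_subset hv)⟩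
      ⟨hvw ▸ hvedge w hw, hfT w (extremePoints_convexHull_subset hw)⟩
  have hTV : T ⊆ affineSpan ℝ V := fun y hy => convexHull_subset_affineSpan V <| by
    rw [convexHull_eq_of_extremePoints_subset (hT.isCompact_convexHull ℝ) (convex_convexHull ℝ T)
      hV subset_rfl extremePoints_subset]
    exact subset_convexHull ℝ T hy
  have hSV : S ⊆ affineSpan ℝ (insert x V) := by
    intro s hsS
    rcases eq_or_ne s x with rfl | hsx
    · exact subset_affineSpan ℝ _ (mem_insert s V)
    · refine affineSpan_pair_le_of_mem_of_mem (subset_affineSpan ℝ _ (mem_insert x V))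
        (affineSpan_mono ℝ (subset_insert x V) (hTV ⟨s, ⟨hsS, hsx⟩, rfl⟩)) ?_
      exact mem_affineSpan_pair_levelCrossing hc (hSc s hsS hsx)
  have : FiniteDimensional ℝ (vectorSpan ℝ (insert x V)) :=
    finiteDimensional_vectorSpan_of_finite ℝ (hV.insert x)
  calc finrank ℝ (vectorSpan ℝ S) ≤ finrank ℝ (vectorSpan ℝ (insert x V)) := by
        refine Submodule.finrank_mono ?_
        simpa only [direction_affineSpan] using AffineSubspace.direction_le (affineSpan_le.2 hSV)
    _ ≤ V.ncard := finrank_vectorSpan_insert_le_ncard hV x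
    _ ≤ (edgesThrough (convexHull ℝ S) x).ncard :=
        ncard_le_ncard_of_injOn edge hedge hinj
          (hS.setOf_isExposed_convexHull.subset fun _ hF => hF.1)

end Polytope

/-- **Minimum degree bound (consequence of Balinski's theorem).**
Every vertex of a `d`-dimensional convex polytope (a polytope in `ℝ^d` whose
affine span is all of `ℝ^d`) is incident to at least `d` edges, where an edge
is a `1`-dimensional exposed face. -/
theorem polytope_vertex_degree_ge_dim {d : ℕ} (P : Set (Fin d → ℝ))
    (S : Finset (Fin d → ℝ)) (hP : P = convexHull ℝ (S : Set (Fin d → ℝ)))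
    (hspan : affineSpan ℝ P = ⊤)
    (x : Fin d → ℝ) (hx : x ∈ P.extremePoints ℝ) :
    d ≤ {E : Set (Fin d → ℝ) |
          IsExposed ℝ P E ∧ x ∈ E ∧
          Module.finrank ℝ (vectorSpan ℝ E) = 1}.ncard := by
  subst hP
  have hspanS : vectorSpan ℝ (S : Set (Fin d → ℝ)) = ⊤ := by
    rw [← direction_affineSpan, ← affineSpan_convexHull, hspan, AffineSubspace.direction_top]
  calc d = finrank ℝ (vectorSpan ℝ (S : Set (Fin d → ℝ))) := by
        rw [hspanS, finrank_top, finrank_fin_fun]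
    _ ≤ _ := finrank_vectorSpan_le_ncard_edgesThrough S.finite_toSet hx
end

section
/- The Klee–Minty polytope in dimension d, defined by 0 ≤ x₁ ≤ 1 and (1/3)xᵢ ≤ x_{i+1} ≤ 1 − (1/3)xᵢ for 1 ≤ i < d, has exactly 2^d vertices, and it admits a strictly ascending path with respect to the objective function x ↦ x_d visiting all 2^d vertices. -/
open Set

/-- The Klee–Minty cube in dimension `d`:
`0 ≤ x₁ ≤ 1` and `(1/3)xᵢ ≤ x_{i+1} ≤ 1 - (1/3)xᵢ` for `1 ≤ i < d`. -/
def kleeMinty (d : ℕ) : Set (Fin d → ℝ) :=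
  {x | (∀ h : 0 < d, 0 ≤ x ⟨0, h⟩ ∧ x ⟨0, h⟩ ≤ 1) ∧
       ∀ (i : ℕ) (h : i + 1 < d),
         (1 / 3) * x ⟨i, Nat.lt_of_succ_lt h⟩ ≤ x ⟨i + 1, h⟩ ∧
         x ⟨i + 1, h⟩ ≤ 1 - (1 / 3) * x ⟨i, Nat.lt_of_succ_lt h⟩}

/-!
Each point of the cube is `point t` for a parameter `t ∈ [0,1]^d`, and `point` is affine in each
parameter `t j` separately. So a point with some `t j ∈ (0,1)` lies inside a segment of the cube
and is not extreme, while for `t ∈ {0,1}^d` (the vertices) the sum of the `d` constraints that are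
tight there exposes the vertex; dropping the `j`-th of them exposes the segment to the vertex whose
parameter differs only at `j`. Ordered by the binary reflected Gray code, the vertices have
increasing last coordinate: the top bit is `0` on the first half of the code, where
`x_d = x_{d-1} / 3 ≤ 1/3`, and `1` on the reflected second half, where
`x_d = 1 - x_{d-1} / 3 ≥ 2/3` decreases as `x_{d-1}` increases.
-/

theorem isExposed_sep_forall_eq {𝕜 E ι : Type*} [TopologicalSpace 𝕜] [Semiring 𝕜]
    [PartialOrder 𝕜] [IsOrderedCancelAddMonoid 𝕜] [ContinuousAdd 𝕜] [AddCommMonoid E]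
    [TopologicalSpace E] [Module 𝕜 E] {A : Set E} (s : Finset ι) (l : ι → StrongDual 𝕜 E)
    (c : ι → 𝕜) (hA : ∀ x ∈ A, ∀ i ∈ s, l i x ≤ c i) :
    IsExposed 𝕜 A {x ∈ A | ∀ i ∈ s, l i x = c i} := by
  rintro ⟨w, hwA, hw⟩
  refine ⟨∑ i ∈ s, l i, Set.ext fun x => ⟨?_, ?_⟩⟩
  · rintro ⟨hxA, hx⟩
    refine ⟨hxA, fun y hy => ?_⟩
    simp only [sum_apply, Finset.sum_congr rfl hx]
    exact Finset.sum_le_sum (hA y hy)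
  · rintro ⟨hxA, hx⟩
    refine ⟨hxA, (Finset.sum_eq_sum_iff_of_le (hA x hxA)).1 (le_antisymm ?_ ?_)⟩
    · exact Finset.sum_le_sum (hA x hxA)
    · simpa only [sum_apply, Finset.sum_congr rfl hw] using hx w hwA

namespace KleeMinty

noncomputable def lower (x : ℕ → ℝ) : ℕ → ℝ
  | 0 => 0
  | n + 1 => x n / 3

theorem mem_kleeMinty_iff {d : ℕ} {x : ℕ → ℝ} :
    (fun i : Fin d => x i) ∈ kleeMinty d ↔
      ∀ n < d, lower x n ≤ x n ∧ x n ≤ 1 - lower x n := by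
  simp only [kleeMinty, mem_ofPred_eq]
  constructor
  · rintro ⟨h0, hs⟩ (_ | n) hn
    · simpa [lower] using h0 hn
    · obtain ⟨h1, h2⟩ := hs n hn
      simp only [lower]
      constructor <;> linarith
  · intro h
    refine ⟨fun hd => by simpa [lower] using h 0 hd, fun n hn => ?_⟩
    obtain ⟨h1, h2⟩ := h (n + 1) hn
    simp only [lower] at h1 h2
    constructor <;> linarith

theorem mem_Icc_of_forall_lower_le {d : ℕ} {x : ℕ → ℝ}
    (hx : ∀ n < d, lower x n ≤ x n ∧ x n ≤ 1 - lower x n) :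
    ∀ n < d, x n ∈ Icc (0 : ℝ) 1 := by
  intro n
  induction n with
  | zero => intro hn; simpa [lower] using hx 0 hn
  | succ n ih =>
    intro hn
    obtain ⟨h0, h1⟩ := ih (by omega)
    obtain ⟨h2, h3⟩ := hx (n + 1) hn
    simp only [lower] at h2 h3
    constructor <;> linarith

/-- `point t` is the point `x` whose coordinate `n` divides `[lower x n, 1 - lower x n]` in the
ratio `t n : 1 - t n` (see `point_eq`). -/
noncomputable def point (t : ℕ → ℝ) : ℕ → ℝ
  | 0 => t 0
  | n + 1 => point t n / 3 + t (n + 1) * (1 - 2 * (point t n / 3))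

theorem point_eq (t : ℕ → ℝ) (n : ℕ) :
    point t n = lower (point t) n + t n * (1 - 2 * lower (point t) n) := by
  cases n <;> simp [point, lower]

theorem point_congr {t s : ℕ → ℝ} {n : ℕ} (h : ∀ i ≤ n, t i = s i) :
    point t n = point s n := by
  induction n with
  | zero => simp [point, h 0 le_rfl]
  | succ n ih => simp [point, h (n + 1) le_rfl, ih fun i hi => h i (by omega)]

theorem lower_point_congr {t s : ℕ → ℝ} {n : ℕ} (h : ∀ i < n, t i = s i) :
    lower (point t) n = lower (point s) n := by
  cases n with
  | zero => rfl
  | succ n => simp [lower, point_congr fun i (hi : i ≤ n) => h i (by omega)]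

theorem point_mem_Icc {t : ℕ → ℝ} {n : ℕ} (ht : ∀ i ≤ n, t i ∈ Icc (0 : ℝ) 1) :
    point t n ∈ Icc (0 : ℝ) 1 := by
  induction n with
  | zero => simpa [point] using ht 0 le_rfl
  | succ n ih =>
    obtain ⟨h0, h1⟩ := ih fun i hi => ht i (by omega)
    obtain ⟨h2, h3⟩ := ht (n + 1) le_rfl
    simp only [point]
    constructor <;> nlinarith

theorem two_mul_lower_point_lt_one {t : ℕ → ℝ} {n : ℕ}
    (ht : ∀ i < n, t i ∈ Icc (0 : ℝ) 1) :
    2 * lower (point t) n < 1 := by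
  cases n with
  | zero => simp [lower]
  | succ n =>
    have := (point_mem_Icc fun i (hi : i ≤ n) => ht i (by omega)).2
    simp only [lower]
    linarith

theorem point_mem_kleeMinty {d : ℕ} {t : ℕ → ℝ} (ht : ∀ n < d, t n ∈ Icc (0 : ℝ) 1) :
    (fun i : Fin d => point t i) ∈ kleeMinty d := by
  refine mem_kleeMinty_iff.2 fun n hn => ?_
  have hw := two_mul_lower_point_lt_one (n := n) fun i hi => ht i (by omega)
  obtain ⟨h0, h1⟩ := ht n hn
  rw [point_eq t n]
  constructor <;> nlinarith

theorem exists_point_eq {d : ℕ} {x : ℕ → ℝ}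
    (hx : ∀ n < d, lower x n ≤ x n ∧ x n ≤ 1 - lower x n) :
    ∃ t : ℕ → ℝ, (∀ n < d, t n ∈ Icc (0 : ℝ) 1) ∧ ∀ n < d, point t n = x n := by
  have hwidth : ∀ n < d, 0 < 1 - 2 * lower x n := by
    rintro (_ | n) hn
    · simp [lower]
    · have := (mem_Icc_of_forall_lower_le hx n (by omega)).2
      simp only [lower]
      linarith
  set t : ℕ → ℝ := fun n => (x n - lower x n) / (1 - 2 * lower x n)
  refine ⟨t, fun n hn => ?_, fun n => ?_⟩
  · obtain ⟨h0, h1⟩ := hx n hn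
    exact ⟨div_nonneg (by linarith) (hwidth n hn).le,
      (div_le_one (hwidth n hn)).2 (by linarith)⟩
  · induction n with
    | zero => intro hn; simp [t, point, lower]
    | succ n ih =>
      intro hn
      have hlower : lower (point t) (n + 1) = lower x (n + 1) := by
        simp only [lower, ih (by omega)]
      rw [point_eq, hlower]
      simp only [t, div_mul_cancel₀ _ (hwidth (n + 1) hn).ne']
      ring

theorem exists_point_eq_of_mem {d : ℕ} {y : Fin d → ℝ} (hy : y ∈ kleeMinty d) :
    ∃ t : ℕ → ℝ, (∀ n < d, t n ∈ Icc (0 : ℝ) 1) ∧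
      y = fun i : Fin d => point t i := by
  set x : ℕ → ℝ := fun n => if h : n < d then y ⟨n, h⟩ else 0
  have hyx : y = fun i : Fin d => x i := funext fun i => by simp [x, i.2]
  rw [hyx, mem_kleeMinty_iff] at hy
  obtain ⟨t, ht, htx⟩ := exists_point_eq hy
  exact ⟨t, ht, hyx.trans (funext fun i => (htx i i.2).symm)⟩

theorem point_update_apply_self (t : ℕ → ℝ) (j : ℕ) (s : ℝ) :
    point (Function.update t j s) j = lower (point t) j + s * (1 - 2 * lower (point t) j) := by
  rw [point_eq, Function.update_self,
    lower_point_congr fun i hi => Function.update_of_ne hi.ne s t]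

theorem point_update (t : ℕ → ℝ) (j : ℕ) (s : ℝ) (n : ℕ) :
    point (Function.update t j s) n =
      (1 - s) * point (Function.update t j 0) n + s * point (Function.update t j 1) n := by
  induction n with
  | zero =>
    simp only [point, Function.update_apply]
    split_ifs <;> ring
  | succ n ih =>
    by_cases hj : n + 1 = j
    · subst hj
      simp only [point_update_apply_self]
      ring
    · simp only [point, Function.update_of_ne hj, ih]
      ring

noncomputable def vertex (ε : ℕ → Bool) : ℕ → ℝ :=
  point fun i => (ε i).toNat

theorem vertex_congr {ε ε' : ℕ → Bool} {n : ℕ} (h : ∀ i ≤ n, ε i = ε' i) :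
    vertex ε n = vertex ε' n :=
  point_congr fun i hi => by rw [h i hi]

theorem vertex_succ (ε : ℕ → Bool) (n : ℕ) :
    vertex ε (n + 1) = if ε (n + 1) then 1 - vertex ε n / 3 else vertex ε n / 3 := by
  simp only [vertex, point]
  cases ε (n + 1)
  · simp
  · simp only [Bool.toNat_true, Nat.cast_one, ↓reduceIte]
    ring

theorem vertex_mem_Icc (ε : ℕ → Bool) (n : ℕ) : vertex ε n ∈ Icc (0 : ℝ) 1 :=
  point_mem_Icc fun i _ => by cases ε i <;> simp

theorem vertex_update (ε : ℕ → Bool) (j : ℕ) (b : Bool) :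
    vertex (Function.update ε j b) =
      point (Function.update (fun i => ((ε i).toNat : ℝ)) j b.toNat) := by
  unfold vertex
  congr 1
  funext i
  exact Function.apply_update (fun _ b => (b.toNat : ℝ)) ε j b i

noncomputable def coord (d n : ℕ) : StrongDual ℝ (Fin d → ℝ) :=
  if h : n < d then ContinuousLinearMap.proj ⟨n, h⟩ else 0

theorem coord_apply {d n : ℕ} (x : ℕ → ℝ) (h : n < d) :
    coord d n (fun i : Fin d => x i) = x n := by
  simp [coord, h]

noncomputable def lowerCLM (d : ℕ) : ℕ → StrongDual ℝ (Fin d → ℝ)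
  | 0 => 0
  | n + 1 => (3 : ℝ)⁻¹ • coord d n

theorem lowerCLM_apply {d n : ℕ} (x : ℕ → ℝ) (h : n < d) :
    lowerCLM d n (fun i : Fin d => x i) = lower x n := by
  cases n with
  | zero => simp [lowerCLM, lower]
  | succ n => simp [lowerCLM, lower, coord_apply x (Nat.lt_of_succ_lt h), div_eq_inv_mul]

/-- `facet d n b y ≤ b.toNat` is the upper (`b = true`) or the lower (`b = false`) constraint on
the coordinate `n` of `y`. -/
noncomputable def facet (d n : ℕ) (b : Bool) : StrongDual ℝ (Fin d → ℝ) :=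
  if b then coord d n + lowerCLM d n else lowerCLM d n - coord d n

theorem facet_apply_point {d n : ℕ} (h : n < d) (b : Bool) (t : ℕ → ℝ) :
    facet d n b (fun i : Fin d => point t i) =
      b.toNat - (if b then 1 - t n else t n) * (1 - 2 * lower (point t) n) := by
  cases b <;>
    simp only [facet, Bool.false_eq_true, ↓reduceIte, add_apply, sub_apply, coord_apply _ h,
      lowerCLM_apply _ h, Bool.toNat_false, Bool.toNat_true, Nat.cast_zero, Nat.cast_one] <;>
    rw [point_eq t n] <;> ring

theorem facet_apply_point_le {d n : ℕ} (h : n < d) (b : Bool) {t : ℕ → ℝ}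
    (ht : ∀ n < d, t n ∈ Icc (0 : ℝ) 1) :
    facet d n b (fun i : Fin d => point t i) ≤ b.toNat := by
  have hw := two_mul_lower_point_lt_one (n := n) fun i hi => ht i (by omega)
  obtain ⟨h0, h1⟩ := ht n h
  rw [facet_apply_point h]
  cases b <;> simp <;> nlinarith

theorem facet_apply_point_eq_iff {d n : ℕ} (h : n < d) (b : Bool) {t : ℕ → ℝ}
    (ht : ∀ n < d, t n ∈ Icc (0 : ℝ) 1) :
    facet d n b (fun i : Fin d => point t i) = b.toNat ↔ t n = b.toNat := by
  have hw := two_mul_lower_point_lt_one (n := n) fun i hi => ht i (by omega)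
  rw [facet_apply_point h, sub_eq_self, mul_eq_zero, or_iff_left (by linarith)]
  cases b <;> simp [sub_eq_zero, eq_comm (a := (1 : ℝ))]

def face (d : ℕ) (ε : ℕ → Bool) (S : Finset ℕ) : Set (Fin d → ℝ) :=
  {y ∈ kleeMinty d | ∀ n ∈ S, facet d n (ε n) y = (ε n).toNat}

theorem isExposed_face {d : ℕ} (ε : ℕ → Bool) {S : Finset ℕ} (hS : ∀ n ∈ S, n < d) :
    IsExposed ℝ (kleeMinty d) (face d ε S) := by
  refine isExposed_sep_forall_eq S (fun n => facet d n (ε n)) _ fun y hy n hn => ?_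
  obtain ⟨t, ht, rfl⟩ := exists_point_eq_of_mem hy
  exact facet_apply_point_le (hS n hn) _ ht

theorem mem_face_iff {d : ℕ} {ε : ℕ → Bool} {S : Finset ℕ} (hS : ∀ n ∈ S, n < d)
    {y : Fin d → ℝ} :
    y ∈ face d ε S ↔ ∃ t : ℕ → ℝ, (∀ n < d, t n ∈ Icc (0 : ℝ) 1) ∧
      (∀ n ∈ S, t n = (ε n).toNat) ∧ y = fun i : Fin d => point t i := by
  constructor
  · rintro ⟨hy, hface⟩
    obtain ⟨t, ht, rfl⟩ := exists_point_eq_of_mem hy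
    exact ⟨t, ht, fun n hn => (facet_apply_point_eq_iff (hS n hn) _ ht).1 (hface n hn), rfl⟩
  · rintro ⟨t, ht, htε, rfl⟩
    exact ⟨point_mem_kleeMinty ht,
      fun n hn => (facet_apply_point_eq_iff (hS n hn) _ ht).2 (htε n hn)⟩

theorem face_range_eq_singleton {d : ℕ} (ε : ℕ → Bool) :
    face d ε (Finset.range d) = {fun i : Fin d => vertex ε i} := by
  ext y
  rw [mem_face_iff fun n hn => Finset.mem_range.1 hn, mem_singleton_iff]
  constructor
  · rintro ⟨t, -, htε, rfl⟩
    exact funext fun i => point_congr fun m hm => htε m (Finset.mem_range.2 (by omega))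
  · rintro rfl
    exact ⟨_, fun n _ => by cases ε n <;> simp, fun n _ => rfl, rfl⟩

theorem face_range_erase_eq_segment {d j : ℕ} (hj : j < d) (ε : ℕ → Bool) :
    face d ε ((Finset.range d).erase j) =
      segment ℝ (fun i : Fin d => vertex (Function.update ε j false) i)
        (fun i : Fin d => vertex (Function.update ε j true) i) := by
  have hS : ∀ n ∈ (Finset.range d).erase j, n < d := fun n hn =>
    Finset.mem_range.1 (Finset.mem_of_mem_erase hn)
  ext y
  rw [mem_face_iff hS, segment_eq_image]
  constructor
  · rintro ⟨t, ht, htε, rfl⟩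
    refine ⟨t j, ht j hj, funext fun i => ?_⟩
    have hagree : ∀ b : Bool, ∀ m ≤ (i : ℕ),
        Function.update (fun i => ((ε i).toNat : ℝ)) j b.toNat m =
          Function.update t j b.toNat m := by
      intro b m hm
      by_cases hmj : m = j
      · simp [hmj]
      · simp only [Function.update_of_ne hmj]
        exact (htε m (Finset.mem_erase.2 ⟨hmj, Finset.mem_range.2 (by omega)⟩)).symm
    simp only [Pi.add_apply, Pi.smul_apply, smul_eq_mul, vertex_update]
    rw [point_congr (hagree false), point_congr (hagree true)]
    simp only [Bool.toNat_false, Bool.toNat_true, Nat.cast_zero, Nat.cast_one]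
    rw [← point_update, Function.update_eq_self]
  · rintro ⟨θ, hθ, rfl⟩
    refine ⟨Function.update (fun i => ((ε i).toNat : ℝ)) j θ, fun n _ => ?_, fun n hn => ?_,
      funext fun i => ?_⟩
    · by_cases hnj : n = j
      · simpa [hnj] using hθ
      · cases h : ε n <;> simp [Function.update_of_ne hnj, h]
    · exact Function.update_of_ne (Finset.ne_of_mem_erase hn) _ _
    · simp only [Pi.add_apply, Pi.smul_apply, smul_eq_mul, vertex_update, point_update _ j θ,
        Bool.toNat_false, Bool.toNat_true, Nat.cast_zero, Nat.cast_one]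

theorem vertex_mem_extremePoints {d : ℕ} (ε : ℕ → Bool) :
    (fun i : Fin d => vertex ε i) ∈ (kleeMinty d).extremePoints ℝ := by
  refine exposedPoints_subset_extremePoints (mem_exposedPoints_iff_exposed_singleton.2 ?_)
  rw [← face_range_eq_singleton]
  exact isExposed_face ε fun n hn => Finset.mem_range.1 hn

theorem exists_eq_vertex_of_mem_extremePoints {d : ℕ} {y : Fin d → ℝ}
    (hy : y ∈ (kleeMinty d).extremePoints ℝ) :
    ∃ ε : ℕ → Bool, y = fun i : Fin d => vertex ε i := by
  obtain ⟨t, ht, rfl⟩ := exists_point_eq_of_mem hy.1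
  have hbool : ∀ j < d, t j = 0 ∨ t j = 1 := by
    intro j hj
    by_contra! hne
    have hupdate : ∀ s ∈ Icc (0 : ℝ) 1, ∀ n < d,
        Function.update t j s n ∈ Icc (0 : ℝ) 1 := by
      intro s hs n hn
      by_cases hnj : n = j
      · simpa [hnj] using hs
      · simpa [hnj] using ht n hn
    have hseg : (fun i : Fin d => point t i) ∈ openSegment ℝ
        (fun i : Fin d => point (Function.update t j 0) i)
        (fun i : Fin d => point (Function.update t j 1) i) := by
      rw [openSegment_eq_image]
      refine ⟨t j, ⟨lt_of_le_of_ne (ht j hj).1 hne.1.symm, lt_of_le_of_ne (ht j hj).2 hne.2⟩,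
        funext fun i => ?_⟩
      simp only [Pi.add_apply, Pi.smul_apply, smul_eq_mul]
      rw [← point_update, Function.update_eq_self]
    obtain ⟨h0, h1⟩ := (mem_extremePoints.1 hy).2 _
      (point_mem_kleeMinty (hupdate 0 (by simp))) _
      (point_mem_kleeMinty (hupdate 1 (by simp))) hseg
    have := congrFun (h0.trans h1.symm) ⟨j, hj⟩
    simp only [point_update_apply_self] at this
    have hw := two_mul_lower_point_lt_one (n := j) fun i hi => ht i (by omega)
    linarith
  refine ⟨fun n => decide (t n = 1), funext fun i => point_congr fun m hm => ?_⟩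
  rcases hbool m (by omega) with h | h <;> simp [h]

theorem isExposed_segment_vertex {d j : ℕ} (hj : j < d) {ε ε' : ℕ → Bool}
    (h : ∀ i, ε' i ≠ ε i ↔ i = j) :
    IsExposed ℝ (kleeMinty d)
      (segment ℝ (fun i : Fin d => vertex ε i) (fun i : Fin d => vertex ε' i)) := by
  wlog hεj : ε j = false generalizing ε ε'
  · rw [segment_symm]
    refine this (fun i => by rw [ne_comm]; exact h i) ?_
    have := (h j).2 rfl
    cases hε : ε j <;> cases hε' : ε' j <;> simp_all
  have h0 : Function.update ε j false = ε := by rw [← hεj, Function.update_eq_self]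
  have h1 : Function.update ε j true = ε' := by
    funext i
    by_cases hij : i = j
    · subst hij
      have := (h i).2 rfl
      cases hε' : ε' i <;> simp_all
    · rw [Function.update_of_ne hij]
      exact (not_not.1 (mt (h i).1 hij)).symm
  have := isExposed_face (d := d) (S := (Finset.range d).erase j) ε fun n hn =>
    Finset.mem_range.1 (Finset.mem_of_mem_erase hn)
  rwa [face_range_erase_eq_segment hj, h0, h1] at this

/-- The binary reflected Gray code: `grayCode n k i` is bit `i` of the `k`-th word of length `n`.
The second half of the list of words of length `n + 1` is the first half in reverse order with
bit `n` set. -/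
def grayCode : ℕ → ℕ → ℕ → Bool
  | 0, _, _ => false
  | n + 1, k, i =>
    if i = n then decide (2 ^ n ≤ k)
    else grayCode n (if k < 2 ^ n then k else 2 ^ (n + 1) - 1 - k) i

theorem grayCode_succ_of_lt {n k : ℕ} (hk : k < 2 ^ n) (i : ℕ) :
    grayCode (n + 1) k i = if i = n then false else grayCode n k i := by
  simp [grayCode, hk, Nat.not_le.2 hk]

theorem grayCode_succ_of_le {n k : ℕ} (hk : 2 ^ n ≤ k) (i : ℕ) :
    grayCode (n + 1) k i = if i = n then true else grayCode n (2 ^ (n + 1) - 1 - k) i := by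
  simp [grayCode, hk, Nat.not_lt.2 hk]

theorem exists_grayCode_eq (ε : ℕ → Bool) (n : ℕ) :
    ∃ k < 2 ^ n, ∀ i < n, grayCode n k i = ε i := by
  induction n with
  | zero => exact ⟨0, by norm_num, fun i hi => absurd hi (Nat.not_lt_zero i)⟩
  | succ n ih =>
    obtain ⟨k, hk, hkε⟩ := ih
    have hpow : 2 ^ (n + 1) = 2 * 2 ^ n := by ring
    cases hεn : ε n
    · refine ⟨k, by omega, fun i hi => ?_⟩
      rw [grayCode_succ_of_lt hk]
      split_ifs with hin
      · rw [hin, hεn]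
      · exact hkε i (by omega)
    · refine ⟨2 ^ (n + 1) - 1 - k, by omega, fun i hi => ?_⟩
      rw [grayCode_succ_of_le (by omega),
        show 2 ^ (n + 1) - 1 - (2 ^ (n + 1) - 1 - k) = k by omega]
      split_ifs with hin
      · rw [hin, hεn]
      · exact hkε i (by omega)

theorem exists_grayCode_succ_ne_iff {n k : ℕ} (hk : k + 1 < 2 ^ n) :
    ∃ j < n, ∀ i, grayCode n (k + 1) i ≠ grayCode n k i ↔ i = j := by
  induction n generalizing k with
  | zero => simp at hk
  | succ n ih =>
    have hpow : 2 ^ (n + 1) = 2 * 2 ^ n := by ring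
    rcases lt_trichotomy (k + 1) (2 ^ n) with hlt | heq | hgt
    · obtain ⟨j, hj, hflip⟩ := ih hlt
      refine ⟨j, by omega, fun i => ?_⟩
      rw [grayCode_succ_of_lt hlt, grayCode_succ_of_lt (by omega)]
      split_ifs with hin
      · simp only [ne_eq, not_true_eq_false, false_iff]
        omega
      · exact hflip i
    · refine ⟨n, by omega, fun i => ?_⟩
      rw [grayCode_succ_of_le heq.ge, grayCode_succ_of_lt (by omega),
        show 2 ^ (n + 1) - 1 - (k + 1) = k by omega]
      split_ifs <;> simp_all
    · obtain ⟨j, hj, hflip⟩ := ih (k := 2 ^ (n + 1) - 1 - (k + 1)) (by omega)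
      refine ⟨j, by omega, fun i => ?_⟩
      rw [grayCode_succ_of_le (by omega), grayCode_succ_of_le (by omega),
        show 2 ^ (n + 1) - 1 - k = 2 ^ (n + 1) - 1 - (k + 1) + 1 by omega, ne_comm]
      split_ifs with hin
      · simp only [ne_eq, not_true_eq_false, false_iff]
        omega
      · exact hflip i

theorem vertex_grayCode_succ_of_lt {n k : ℕ} (hk : k < 2 ^ (n + 1)) :
    vertex (grayCode (n + 2) k) (n + 1) = vertex (grayCode (n + 1) k) n / 3 := by
  have hlow : ∀ i ≤ n, grayCode (n + 2) k i = grayCode (n + 1) k i := fun i hi => by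
    rw [grayCode_succ_of_lt hk, if_neg (by omega)]
  simp [vertex_succ, vertex_congr hlow, grayCode_succ_of_lt hk]

theorem vertex_grayCode_succ_of_le {n k : ℕ} (hk : 2 ^ (n + 1) ≤ k) :
    vertex (grayCode (n + 2) k) (n + 1) =
      1 - vertex (grayCode (n + 1) (2 ^ (n + 2) - 1 - k)) n / 3 := by
  have hlow : ∀ i ≤ n, grayCode (n + 2) k i = grayCode (n + 1) (2 ^ (n + 2) - 1 - k) i :=
    fun i hi => by rw [grayCode_succ_of_le hk, if_neg (by omega)]
  simp [vertex_succ, vertex_congr hlow, grayCode_succ_of_le hk]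

theorem strictMonoOn_vertex_grayCode (n : ℕ) :
    StrictMonoOn (fun k => vertex (grayCode (n + 1) k) n) (Iio (2 ^ (n + 1))) := by
  induction n with
  | zero =>
    intro k hk l hl hkl
    simp only [mem_Iio, zero_add, pow_one] at hk hl
    obtain ⟨rfl, rfl⟩ : k = 0 ∧ l = 1 := by omega
    simp [vertex, point, grayCode]
  | succ n ih =>
    intro k hk l hl hkl
    simp only [mem_Iio] at hk hl
    have hpow : 2 ^ (n + 2) = 2 * 2 ^ (n + 1) := by ring
    dsimp only
    rcases lt_or_ge l (2 ^ (n + 1)) with hl' | hl'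
    · have : vertex (grayCode (n + 1) k) n < vertex (grayCode (n + 1) l) n :=
        ih (by simp; omega) hl' hkl
      rw [vertex_grayCode_succ_of_lt (hkl.trans hl'), vertex_grayCode_succ_of_lt hl']
      linarith
    rw [vertex_grayCode_succ_of_le hl']
    rcases lt_or_ge k (2 ^ (n + 1)) with hk' | hk'
    · rw [vertex_grayCode_succ_of_lt hk']
      have hk1 := (vertex_mem_Icc (grayCode (n + 1) k) n).2
      have hl0 := (vertex_mem_Icc (grayCode (n + 1) (2 ^ (n + 2) - 1 - l)) n).2
      linarith
    · have : vertex (grayCode (n + 1) (2 ^ (n + 2) - 1 - l)) n <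
          vertex (grayCode (n + 1) (2 ^ (n + 2) - 1 - k)) n :=
        ih (by simp; omega) (by simp; omega) (by omega)
      rw [vertex_grayCode_succ_of_le hk']
      linarith

end KleeMinty

/-- The Klee–Minty cube in dimension `d` has exactly `2^d` vertices, and it
admits a strictly ascending path (with respect to the objective `x ↦ x_d`,
consecutive vertices joined by edges of the polytope) visiting all `2^d`
vertices. -/
theorem kleeMinty_ascending_path {d : ℕ} (hd : 0 < d) :
    ((kleeMinty d).extremePoints ℝ).ncard = 2 ^ d ∧
    ∃ v : ℕ → (Fin d → ℝ),
      (Set.range fun k : Fin (2 ^ d) => v (k : ℕ)) =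
          (kleeMinty d).extremePoints ℝ ∧
      (∀ k l : ℕ, k < l → l < 2 ^ d → v k ≠ v l) ∧
      ∀ k : ℕ, k + 1 < 2 ^ d →
        IsExposed ℝ (kleeMinty d) (segment ℝ (v k) (v (k + 1))) ∧
        v k ⟨d - 1, Nat.sub_lt hd one_pos⟩ <
          v (k + 1) ⟨d - 1, Nat.sub_lt hd one_pos⟩ := by
  obtain ⟨n, rfl⟩ : ∃ n, d = n + 1 := ⟨d - 1, by omega⟩
  have hmono := KleeMinty.strictMonoOn_vertex_grayCode n
  set v : ℕ → Fin (n + 1) → ℝ := fun k i =>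
    KleeMinty.vertex (KleeMinty.grayCode (n + 1) k) i
  have hinj : Function.Injective fun k : Fin (2 ^ (n + 1)) => v k :=
    fun k l hkl => Fin.ext (hmono.injOn k.2 l.2 (congrFun hkl ⟨n, by omega⟩))
  have hrange : range (fun k : Fin (2 ^ (n + 1)) => v k) =
      (kleeMinty (n + 1)).extremePoints ℝ := by
    ext y
    constructor
    · rintro ⟨k, rfl⟩
      exact KleeMinty.vertex_mem_extremePoints _
    · intro hy
      obtain ⟨ε, rfl⟩ := KleeMinty.exists_eq_vertex_of_mem_extremePoints hy
      obtain ⟨k, hk, hkε⟩ := KleeMinty.exists_grayCode_eq ε (n + 1)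
      exact ⟨⟨k, hk⟩, funext fun i => KleeMinty.vertex_congr fun m hm => hkε m (by omega)⟩
  refine ⟨by rw [← hrange, ncard_range_of_injective hinj, Nat.card_fin], v, hrange,
    fun k l hkl hl heq => (hmono (hkl.trans hl) hl hkl).ne (congrFun heq ⟨n, by omega⟩),
    fun k hk => ⟨?_, hmono (mem_Iio.2 (by omega)) hk k.lt_succ_self⟩⟩
  obtain ⟨j, hj, hflip⟩ := KleeMinty.exists_grayCode_succ_ne_iff hk
  exact KleeMinty.isExposed_segment_vertex hj hflip
end

section
/- At a rubber-band equilibrium, every free vertex lies in the convex hull of the fixed vertices: if x : V → ℝ³ satisfies Σ_{w ∈ N(v)} δ_{vw}(x_v − x_w) = 0 with δ_{vw} > 0 for all v ∉ Φ, and G is connected with Φ ≠ ∅, then x_v ∈ conv{ x_u : u ∈ Φ } for every v ∈ V. -/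
/-!
Separate a point outside the convex hull of the fixed positions by a continuous linear functional
`f`. Then `-f ∘ x` is a harmonic function on the free vertices, so by the discrete maximum
principle its maximum is attained on a fixed vertex (at a free maximizer every neighbour is also a
maximizer, and connectivity leads into `Φ`); this contradicts the separation.
-/

open Set Finset

namespace SimpleGraph

variable {V : Type*} [Fintype V] {G : SimpleGraph V} [DecidableRel G.Adj]
  {Φ : Set V} {δ : V → V → ℝ} {g : V → ℝ}

/-- Otherwise `b` contributes a positive term to a sum of nonnegative terms. -/
lemma eq_of_isMaxOn_of_adj (hδ : ∀ v w, G.Adj v w → 0 < δ v w) {a b : V}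
    (hsub : ∑ w ∈ G.neighborFinset a, δ a w * (g a - g w) ≤ 0)
    (hmax : IsMaxOn g univ a) (hab : G.Adj a b) : g b = g a := by
  by_contra hne
  have hlt : g b < g a := (isMaxOn_univ_iff.1 hmax b).lt_of_ne hne
  have hpos : 0 < ∑ w ∈ G.neighborFinset a, δ a w * (g a - g w) := by
    refine Finset.sum_pos' (fun w hw => ?_) ⟨b, (G.mem_neighborFinset a b).2 hab, ?_⟩
    · exact mul_nonneg (hδ a w ((G.mem_neighborFinset a w).1 hw)).le
        (sub_nonneg.2 (isMaxOn_univ_iff.1 hmax w))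
    · exact mul_pos (hδ a b hab) (sub_pos.2 hlt)
  exact hsub.not_gt hpos

lemma Walk.exists_mem_isMaxOn (hδ : ∀ v w, G.Adj v w → 0 < δ v w)
    (hsub : ∀ v ∉ Φ, ∑ w ∈ G.neighborFinset v, δ v w * (g v - g w) ≤ 0) :
    ∀ {a b : V}, G.Walk a b → b ∈ Φ → IsMaxOn g univ a → ∃ u ∈ Φ, IsMaxOn g univ u
  | _, _, .nil, hb, ha => ⟨_, hb, ha⟩
  | a, _, .cons (v := c) hac p, hb, ha => by
    by_cases haΦ : a ∈ Φ
    · exact ⟨a, haΦ, ha⟩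
    · have hc : IsMaxOn g univ c := isMaxOn_univ_iff.2 fun w =>
        (eq_of_isMaxOn_of_adj hδ (hsub a haΦ) ha hac).symm ▸ isMaxOn_univ_iff.1 ha w
      exact exists_mem_isMaxOn hδ hsub p hb hc

lemma Connected.exists_mem_isMaxOn (hG : G.Connected) (hΦ : Φ.Nonempty)
    (hδ : ∀ v w, G.Adj v w → 0 < δ v w)
    (hsub : ∀ v ∉ Φ, ∑ w ∈ G.neighborFinset v, δ v w * (g v - g w) ≤ 0) :
    ∃ u ∈ Φ, IsMaxOn g univ u := by
  have : Nonempty V := hG.nonempty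
  obtain ⟨a, -, ha⟩ := Finset.exists_max_image univ g univ_nonempty
  obtain ⟨b, hb⟩ := hΦ
  exact (hG a b).some.exists_mem_isMaxOn hδ hsub hb fun v _ => ha v (mem_univ v)

variable {E : Type*} [TopologicalSpace E] [AddCommGroup E] [Module ℝ E] [T2Space E]
  [IsTopologicalAddGroup E] [ContinuousSMul ℝ E] [LocallyConvexSpace ℝ E]

lemma Connected.mem_convexHull_image (hG : G.Connected) (hΦ : Φ.Nonempty)
    (hδ : ∀ v w, G.Adj v w → 0 < δ v w) {x : V → E}
    (heq : ∀ v ∉ Φ, ∑ w ∈ G.neighborFinset v, δ v w • (x v - x w) = 0) (v : V) :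
    x v ∈ convexHull ℝ (x '' Φ) := by
  by_contra hv
  obtain ⟨f, c, hfv, hf⟩ := geometric_hahn_banach_point_closed (convex_convexHull ℝ _)
    ((Set.toFinite (x '' Φ)).isClosed_convexHull ℝ) hv
  have hharm : ∀ a ∉ Φ,
      ∑ w ∈ G.neighborFinset a, δ a w * (-f (x a) - -f (x w)) ≤ 0 := fun a ha => by
    have hfa := congrArg f (heq a ha)
    simp only [map_sum, map_smul, map_sub, smul_eq_mul, map_zero] at hfa
    simp only [neg_sub_neg, ← neg_sub (f (x a)), mul_neg, Finset.sum_neg_distrib, hfa, neg_zero,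
      le_refl]
  obtain ⟨u, huΦ, hu⟩ := hG.exists_mem_isMaxOn hΦ hδ hharm
  have hfu : c < f (x u) := hf _ (subset_convexHull ℝ _ ⟨u, huΦ, rfl⟩)
  have hvu : -f (x v) ≤ -f (x u) := isMaxOn_univ_iff.1 hu v
  linarith

end SimpleGraph

theorem rubber_band_maximum_principle_general {V : Type*} [Fintype V]
    (G : SimpleGraph V) [DecidableRel G.Adj] (hGconn : G.Connected)
    (Φ : Set V) (hΦ : Φ.Nonempty)
    (δ : V → V → ℝ) (hδpos : ∀ v w, G.Adj v w → 0 < δ v w)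
    (x : V → EuclideanSpace ℝ (Fin 3))
    (heq : ∀ v ∉ Φ, ∑ w ∈ G.neighborFinset v, δ v w • (x v - x w) = 0) :
    ∀ v : V, x v ∈ convexHull ℝ (x '' Φ) :=
  hGconn.mem_convexHull_image hΦ hδpos heq

/-- **Discrete maximum principle for rubber-band equilibria.**  If a placement
`x : V → ℝ³` of a finite connected graph satisfies the equilibrium condition
`Σ_{w ∈ N(v)} δ_{vw}(x_v - x_w) = 0` with positive weights at every vertex not
in the nonempty set `Φ` of fixed vertices, then every vertex lies in the
convex hull of the positions of the fixed vertices. -/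
theorem rubber_band_maximum_principle {V : Type*} [Fintype V] [DecidableEq V]
    (G : SimpleGraph V) [DecidableRel G.Adj] (hGconn : G.Connected)
    (Φ : Set V) (hΦ : Φ.Nonempty)
    (δ : V → V → ℝ) (hδpos : ∀ v w, G.Adj v w → 0 < δ v w)
    (x : V → EuclideanSpace ℝ (Fin 3))
    (heq : ∀ v ∉ Φ, ∑ w ∈ G.neighborFinset v, δ v w • (x v - x w) = 0) :
    ∀ v : V, x v ∈ convexHull ℝ (x '' Φ) :=
  rubber_band_maximum_principle_general G hGconn Φ hΦ δ hδpos x heq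
end
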